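/- If ρ : (ℂⁿ, +) → GL_N(ℂ) is a group homomorphism such that ρ(v) − I is nilpotent of nilpotency index at most l+1 for all v (i.e. (ρ(v) − I)^{l+1} = 0), and each entry of ρ(v) is a polynomial function of v, then ρ(v) = exp(L(v)) where L : ℂⁿ → Mat_N(ℂ) is linear and L(v)^{l+1} = 0 for all v. -/

import Mathlib

open Polynomial

noncomputable def Epoly (m : ℕ) : Polynomial ℂ :=
  ∑ j ∈ Finset.range m, C ((j.factorial : ℂ)⁻¹) * X ^ j

noncomputable def Lgpoly (m : ℕ) : Polynomial ℂ :=
  ∑ k ∈ Finset.range m, C ((-1) ^ (k + 1) * (k : ℂ)⁻¹) * X ^ k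

lemma coeff_sum_C_mul_X_pow (m k : ℕ) (f : ℕ → ℂ) :
    (∑ j ∈ Finset.range m, C (f j) * X ^ j).coeff k = if k < m then f k else 0 := by
  rw [finset_sum_coeff]
  simp only [coeff_C_mul, coeff_X_pow, mul_ite, mul_one, mul_zero]
  rw [Finset.sum_ite_eq (Finset.range m) k f]
  simp [Finset.mem_range]

lemma Epoly_coeff (m k : ℕ) :
    (Epoly m).coeff k = if k < m then ((k.factorial : ℂ)⁻¹) else 0 :=
  coeff_sum_C_mul_X_pow m k _

lemma Lgpoly_coeff (m k : ℕ) :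
    (Lgpoly m).coeff k = if k < m then ((-1) ^ (k + 1) * (k : ℂ)⁻¹) else 0 :=
  coeff_sum_C_mul_X_pow m k _

lemma Epoly_coeff_zero {m : ℕ} (hm : 1 ≤ m) : (Epoly m).coeff 0 = 1 := by
  rw [Epoly_coeff, if_pos (by omega : 0 < m)]; simp

lemma Lgpoly_coeff_zero (m : ℕ) : (Lgpoly m).coeff 0 = 0 := by
  rw [Lgpoly_coeff]
  split <;> simp

lemma X_dvd_Lgpoly (m : ℕ) : X ∣ Lgpoly m := X_dvd_iff.2 (Lgpoly_coeff_zero m)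

lemma Epoly_succ (m : ℕ) :
    Epoly (m + 1) = Epoly m + C ((m.factorial : ℂ)⁻¹) * X ^ m :=
  Finset.sum_range_succ _ m

lemma derivative_Epoly (m : ℕ) : derivative (Epoly (m + 1)) = Epoly m := by
  ext k
  rw [coeff_derivative, Epoly_coeff, Epoly_coeff]
  by_cases h : k < m
  · rw [if_pos (by omega), if_pos h, Nat.factorial_succ]
    push_cast
    have h1 : ((k : ℂ) + 1) ≠ 0 := Nat.cast_add_one_ne_zero k
    have h2 : ((k.factorial : ℂ)) ≠ 0 := Nat.cast_ne_zero.2 k.factorial_ne_zero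
    field_simp
  · rw [if_neg (by omega), if_neg h, zero_mul]

lemma derivative_Lgpoly (m : ℕ) :
    derivative (Lgpoly (m + 1)) = ∑ i ∈ Finset.range m, (-X) ^ i := by
  have : (∑ i ∈ Finset.range m, ((-X : Polynomial ℂ)) ^ i)
      = ∑ i ∈ Finset.range m, C (((-1) ^ i : ℂ)) * X ^ i := by
    refine Finset.sum_congr rfl fun i _ => ?_
    rw [neg_pow]
    congr 1
    rw [map_pow, map_neg, map_one]
  rw [this]
  ext k
  rw [coeff_derivative, Lgpoly_coeff, coeff_sum_C_mul_X_pow]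
  by_cases h : k < m
  · rw [if_pos (by omega), if_pos h]
    have h1 : ((k : ℂ) + 1) ≠ 0 := Nat.cast_add_one_ne_zero k
    push_cast
    field_simp
    ring
  · rw [if_neg (by omega), if_neg h, zero_mul]

lemma one_add_X_mul_derivative_Lgpoly (m : ℕ) :
    (1 + X) * derivative (Lgpoly (m + 1)) = 1 - (-X) ^ m := by
  rw [derivative_Lgpoly]
  have h := geom_sum_mul (-X : Polynomial ℂ) m
  linear_combination -h

lemma key1 (m : ℕ) :
    X ^ (m + 1) ∣ (Epoly (m + 1)).comp (Lgpoly (m + 1)) - (1 + X) := by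
  set L : Polynomial ℂ := Lgpoly (m + 1) with hLdef
  set F : Polynomial ℂ := (Epoly (m + 1)).comp L with hFdef
  have hXL : X ∣ L := X_dvd_Lgpoly _
  have hc0 : F.coeff 0 = 1 := by
    have h1 : eval 0 L = 0 := by rw [← coeff_zero_eq_eval_zero]; exact Lgpoly_coeff_zero _
    rw [hFdef, coeff_zero_eq_eval_zero, eval_comp, h1, ← coeff_zero_eq_eval_zero]
    exact Epoly_coeff_zero (by omega)
  have hEm' : (Epoly m).comp L = F - C ((m.factorial : ℂ)⁻¹) * L ^ m := by
    have h : Epoly m = Epoly (m + 1) - C ((m.factorial : ℂ)⁻¹) * X ^ m := by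
      rw [Epoly_succ]; ring
    rw [h, sub_comp, mul_comp, C_comp, X_pow_comp]
  have hdF : derivative F = derivative L * ((Epoly m).comp L) := by
    rw [hFdef, derivative_comp, derivative_Epoly]
  have hmain : (1 + X) * derivative F - F
      = -((-X) ^ m * F) - (1 - (-X) ^ m) * (C ((m.factorial : ℂ)⁻¹) * L ^ m) := by
    calc (1 + X) * derivative F - F
        = ((1 + X) * derivative L) * ((Epoly m).comp L) - F := by rw [hdF]; ring
      _ = (1 - (-X) ^ m) * (F - C ((m.factorial : ℂ)⁻¹) * L ^ m) - F := by
          rw [one_add_X_mul_derivative_Lgpoly, hEm']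
      _ = _ := by ring
  have hdvd : X ^ m ∣ (1 + X) * derivative F - F := by
    rw [hmain]
    have h1 : (X : Polynomial ℂ) ^ m ∣ (-X) ^ m := by
      rw [neg_pow]; exact dvd_mul_left _ _
    exact dvd_sub (dvd_neg.2 (h1.mul_right F))
      (((pow_dvd_pow_of_dvd hXL m).mul_left _).mul_left _)
  have hco : ∀ k, k < m → ((1 + X) * derivative F).coeff k = F.coeff k := by
    intro k hk
    have h := (X_pow_dvd_iff.1 hdvd) k hk
    rw [coeff_sub] at h
    exact sub_eq_zero.1 h
  have hrec0 : 0 < m → F.coeff 1 = F.coeff 0 := by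
    intro h
    have h2 := hco 0 h
    rw [add_mul, one_mul, coeff_add, mul_coeff_zero, coeff_X_zero, zero_mul, add_zero,
      coeff_derivative] at h2
    simpa using h2
  have hrecS : ∀ k, k + 1 < m →
      F.coeff (k + 2) * ((k : ℂ) + 2) + F.coeff (k + 1) * ((k : ℂ) + 1) = F.coeff (k + 1) := by
    intro k hk
    have h2 := hco (k + 1) hk
    rw [add_mul, one_mul, coeff_add, coeff_X_mul, coeff_derivative, coeff_derivative] at h2
    push_cast at h2 ⊢
    linear_combination h2
  have hvanish : ∀ j, 2 ≤ j → j < m + 1 → F.coeff j = 0 := by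
    intro j h2j
    induction j, h2j using Nat.le_induction with
    | base =>
      intro hj
      have h2 := hrecS 0 (by omega)
      have h1 := hrec0 (by omega)
      have : F.coeff 2 * ((0 : ℂ) + 2) = 0 := by linear_combination h2
      have h3 : ((0 : ℂ) + 2) ≠ 0 := by norm_num
      exact (mul_eq_zero.1 this).resolve_right h3
    | succ j hj IH =>
      intro hj1
      obtain ⟨k, rfl⟩ : ∃ k, j = k + 1 := ⟨j - 1, by omega⟩
      have h2 := hrecS k (by omega)
      have h0 : F.coeff (k + 1) = 0 := IH (by omega)
      rw [h0] at h2
      have h3 : F.coeff (k + 2) * ((k : ℂ) + 2) = 0 := by linear_combination h2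
      have h4 : ((k : ℂ) + 2) ≠ 0 := by
        have : ((k : ℂ) + 2) = ((k + 2 : ℕ) : ℂ) := by push_cast; ring
        rw [this]
        exact Nat.cast_ne_zero.2 (by omega)
      exact (mul_eq_zero.1 h3).resolve_right h4
  rw [X_pow_dvd_iff]
  intro d hd
  rw [coeff_sub]
  match d with
  | 0 => simp [hc0]
  | 1 =>
    have h1 := hrec0 (by omega)
    rw [h1, hc0]
    simp [coeff_one, coeff_X]
  | (j + 2) =>
    rw [hvanish (j + 2) (by omega) hd]
    simp [coeff_one, coeff_X]

lemma key2 (m : ℕ) :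
    X ^ (m + 1) ∣ (Lgpoly (m + 1)).comp (Epoly (m + 1) - 1) - X := by
  set E : Polynomial ℂ := Epoly (m + 1) with hEdef
  set G : Polynomial ℂ := (Lgpoly (m + 1)).comp (E - 1) with hGdef
  have hE0 : (E - 1).coeff 0 = 0 := by
    rw [coeff_sub, hEdef, Epoly_coeff_zero (by omega)]
    simp [coeff_one]
  have hXE : X ∣ (E - 1) := X_dvd_iff.2 hE0
  have hc0 : G.coeff 0 = 0 := by
    have h1 : eval 0 (E - 1) = 0 := by rw [← coeff_zero_eq_eval_zero]; exact hE0
    rw [hGdef, coeff_zero_eq_eval_zero, eval_comp, h1, ← coeff_zero_eq_eval_zero]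
    exact Lgpoly_coeff_zero _
  have hid : E * (derivative (Lgpoly (m + 1))).comp (E - 1) = 1 - (-(E - 1)) ^ m := by
    have h := congrArg (fun p : Polynomial ℂ => p.comp (E - 1))
      (one_add_X_mul_derivative_Lgpoly m)
    simp only [mul_comp, add_comp, one_comp, X_comp, sub_comp, pow_comp, neg_comp] at h
    calc E * (derivative (Lgpoly (m + 1))).comp (E - 1)
        = (1 + (E - 1)) * (derivative (Lgpoly (m + 1))).comp (E - 1) := by ring
      _ = 1 - (-(E - 1)) ^ m := h
  have hdG : derivative G = derivative E * (derivative (Lgpoly (m + 1))).comp (E - 1) := by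
    rw [hGdef, derivative_comp, derivative_sub, derivative_one, sub_zero]
  have hE' : derivative E = E - C ((m.factorial : ℂ)⁻¹) * X ^ m := by
    rw [hEdef, derivative_Epoly, Epoly_succ]
    ring
  have hmain : E * (derivative G - 1)
      = -(E * (-(E - 1)) ^ m) - (C ((m.factorial : ℂ)⁻¹) * X ^ m) * (1 - (-(E - 1)) ^ m) := by
    calc E * (derivative G - 1)
        = derivative E * (E * (derivative (Lgpoly (m + 1))).comp (E - 1)) - E := by
          rw [hdG]; ring
      _ = (E - C ((m.factorial : ℂ)⁻¹) * X ^ m) * (1 - (-(E - 1)) ^ m) - E := by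
          rw [hid, hE']
      _ = _ := by ring
  have hP : X ^ m ∣ (-(E - 1)) ^ m := by
    rw [neg_pow]
    exact (pow_dvd_pow_of_dvd hXE m).mul_left _
  have hdvd0 : X ^ m ∣ E * (derivative G - 1) := by
    rw [hmain]
    exact dvd_sub (dvd_neg.2 (hP.mul_left E)) (((dvd_mul_left (X ^ m) _).mul_right _))
  have hXnE : ¬ (X : Polynomial ℂ) ∣ E := by
    rw [X_dvd_iff, hEdef, Epoly_coeff_zero (by omega)]
    exact one_ne_zero
  have hdvd : X ^ m ∣ derivative G - 1 := prime_X.pow_dvd_of_dvd_mul_left m hXnE hdvd0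
  have hco : ∀ k, k < m → (derivative G).coeff k = (1 : Polynomial ℂ).coeff k := by
    intro k hk
    have h := X_pow_dvd_iff.1 hdvd k hk
    rw [coeff_sub] at h
    exact sub_eq_zero.1 h
  have hrec0 : 0 < m → G.coeff 1 = 1 := by
    intro h
    have h2 := hco 0 h
    rw [coeff_derivative, coeff_one] at h2
    simpa using h2
  have hvan : ∀ j, 2 ≤ j → j < m + 1 → G.coeff j = 0 := by
    intro j h2j hj
    obtain ⟨k, rfl⟩ : ∃ k, j = k + 2 := ⟨j - 2, by omega⟩
    have h2 := hco (k + 1) (by omega)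
    rw [coeff_derivative, coeff_one] at h2
    rw [if_neg (by omega : ¬ (k + 1 = 0))] at h2
    have h4 : ((k + 1 : ℕ) : ℂ) + 1 ≠ 0 := Nat.cast_add_one_ne_zero _
    exact (mul_eq_zero.1 h2).resolve_right h4
  rw [X_pow_dvd_iff]
  intro d hd
  rw [coeff_sub]
  match d with
  | 0 => simp [hc0]
  | 1 =>
    rw [hrec0 (by omega), coeff_X]
    simp
  | (j + 2) =>
    rw [hvan (j + 2) (by omega) hd, coeff_X]
    simp

section NilpotentExpLog

open NormedSpace

variable {A : Type*} [Ring A] [Algebra ℂ A] [TopologicalSpace A] [IsTopologicalRing A]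

lemma exp_eq_aeval_Epoly (a : A) (m : ℕ) (h : a ^ m = 0) :
    exp a = Polynomial.aeval a (Epoly m) := by
  rw [exp_eq_tsum ℂ]
  change ∑' (j : ℕ), ((j.factorial : ℂ))⁻¹ • a ^ j = _
  rw [tsum_eq_sum (s := Finset.range m)
    (fun j hj => by
      have hj' : a ^ j = 0 := by
        rw [show j = m + (j - m) from by
          simpa using (Nat.add_sub_cancel' (le_of_not_gt (Finset.mem_range.not.1 hj ∘ id))).symm,
          pow_add, h, zero_mul]
      rw [hj', smul_zero])]
  rw [Epoly, map_sum]
  refine Finset.sum_congr rfl fun j _ => ?_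
  rw [map_mul, aeval_C, map_pow, aeval_X, Algebra.smul_def]

noncomputable def matLog (m : ℕ) (x : A) : A := Polynomial.aeval (x - 1) (Lgpoly m)

lemma commute_aeval_left {z w : A} (h : Commute z w) (p : Polynomial ℂ) :
    Commute (Polynomial.aeval z p) w := by
  induction p using Polynomial.induction_on' with
  | add p q hp hq => rw [map_add]; exact hp.add_left hq
  | monomial i c =>
    rw [aeval_monomial]
    exact (Algebra.commute_algebraMap_left c w).mul_left (h.pow_left i)

lemma commute_aeval₂ {x y : A} (h : Commute x y) (p q : Polynomial ℂ) :
    Commute (Polynomial.aeval (x - 1) p) (Polynomial.aeval (y - 1) q) := by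
  have c1 : Commute x (y - 1) := h.sub_right (Commute.one_right x)
  have c2 : Commute (x - 1) (y - 1) := c1.sub_left (Commute.one_left _)
  exact (commute_aeval_left (commute_aeval_left c2 p).symm q).symm

lemma matLog_pow (m : ℕ) (x : A) (h : (x - 1) ^ m = 0) : (matLog m x) ^ m = 0 := by
  obtain ⟨q, hq⟩ := X_dvd_Lgpoly m
  have h1 : matLog m x = (x - 1) * Polynomial.aeval (x - 1) q := by
    rw [matLog, hq, map_mul, aeval_X]
  have h2 : Commute (x - 1) (Polynomial.aeval (x - 1) q) := by
    have := commute_aeval_left (Commute.refl (x - 1)) q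
    exact this.symm
  rw [h1, h2.mul_pow, h, zero_mul]

lemma exp_matLog (m : ℕ) (x : A) (h : (x - 1) ^ (m + 1) = 0) :
    exp (matLog (m + 1) x) = x := by
  rw [exp_eq_aeval_Epoly _ (m + 1) (matLog_pow _ _ h), matLog, ← aeval_comp]
  obtain ⟨q, hq⟩ := key1 m
  rw [sub_eq_iff_eq_add.mp hq]
  simp [map_add, map_mul, map_pow, aeval_X, h]

end NilpotentExpLog

section NilpotentExpLog2

open NormedSpace

variable {A : Type*} [Ring A] [Algebra ℂ A] [TopologicalSpace A] [IsTopologicalRing A]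

lemma matLog_exp (m : ℕ) (a : A) (h : a ^ (m + 1) = 0) :
    matLog (m + 1) (exp a) = a := by
  rw [matLog, exp_eq_aeval_Epoly a (m + 1) h,
    show Polynomial.aeval a (Epoly (m + 1)) - 1 = Polynomial.aeval a (Epoly (m + 1) - 1) from by
      rw [map_sub, map_one],
    ← aeval_comp]
  obtain ⟨q, hq⟩ := key2 m
  rw [sub_eq_iff_eq_add.mp hq]
  simp [map_add, map_mul, map_pow, aeval_X, h]

lemma exp_inj_of_isNilpotent {a b : A} (ha : IsNilpotent a) (hb : IsNilpotent b)
    (h : exp a = exp b) : a = b := by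
  obtain ⟨j, hj⟩ := ha
  obtain ⟨k, hk⟩ := hb
  have ha' : a ^ (j + k + 1) = 0 := by
    rw [show j + k + 1 = j + (k + 1) from by omega, pow_add, hj, zero_mul]
  have hb' : b ^ (j + k + 1) = 0 := by
    rw [show j + k + 1 = k + (j + 1) from by omega, pow_add, hk, zero_mul]
  calc a = matLog (j + k + 1) (exp a) := (matLog_exp (j + k) a ha').symm
    _ = matLog (j + k + 1) (exp b) := by rw [h]
    _ = b := matLog_exp (j + k) b hb'

end NilpotentExpLog2

lemma mv_aeval_eq_eval {n : ℕ} (v : Fin n → ℂ) (q : MvPolynomial (Fin n) ℂ) :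
    MvPolynomial.aeval v q = MvPolynomial.eval v q := by
  rw [MvPolynomial.aeval_def, Algebra.algebraMap_self]
  rfl

lemma eval_aeval_line {n : ℕ} (v : Fin n → ℂ) (t : ℂ) (q : MvPolynomial (Fin n) ℂ) :
    Polynomial.eval t (MvPolynomial.aeval (fun i => Polynomial.C (v i) * Polynomial.X) q)
      = MvPolynomial.eval (t • v) q := by
  induction q using MvPolynomial.induction_on with
  | C a => simp
  | add p q hp hq => simp [hp, hq]
  | mul_X p i hp =>
    simp only [map_mul, MvPolynomial.aeval_X, Polynomial.eval_mul, hp, MvPolynomial.eval_mul,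
      MvPolynomial.eval_X, Polynomial.eval_C, Polynomial.eval_X, Pi.smul_apply, smul_eq_mul]
    ring




open NormedSpace in
/-- If `ρ : (ℂⁿ, +) → GL_N(ℂ)` is a group homomorphism with `(ρ(v) − I)^{l+1} = 0` for all
`v` and polynomial matrix entries, then `ρ(v) = exp(L(v))` for a linear map
`L : ℂⁿ → Mat_N(ℂ)` with `L(v)^{l+1} = 0` for all `v`. -/
theorem polynomial_unipotent_hom_is_exp_of_linear (n N l : ℕ)
    (ρ : (Fin n → ℂ) → Matrix (Fin N) (Fin N) ℂ)
    (hhom : ∀ v w : Fin n → ℂ, ρ (v + w) = ρ v * ρ w)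
    (hunit : ∀ v : Fin n → ℂ, IsUnit (ρ v))
    (hnil : ∀ v : Fin n → ℂ, (ρ v - 1) ^ (l + 1) = 0)
    (hpoly : ∀ a b : Fin N, ∃ p : MvPolynomial (Fin n) ℂ,
      ∀ v : Fin n → ℂ, ρ v a b = MvPolynomial.eval v p) :
    ∃ L : (Fin n → ℂ) →ₗ[ℂ] Matrix (Fin N) (Fin N) ℂ,
      (∀ v : Fin n → ℂ, (L v) ^ (l + 1) = 0) ∧
      ∀ v : Fin n → ℂ, ρ v = exp (L v) := by
  classical
  have hcommρ : ∀ v w, Commute (ρ v) (ρ w) := by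
    intro v w
    unfold Commute SemiconjBy
    rw [← hhom, ← hhom, add_comm]
  set L0 : (Fin n → ℂ) → Matrix (Fin N) (Fin N) ℂ := fun v => matLog (l + 1) (ρ v) with hL0
  have hL0nil : ∀ v, (L0 v) ^ (l + 1) = 0 := fun v => matLog_pow (l + 1) (ρ v) (hnil v)
  have hexp : ∀ v, exp (L0 v) = ρ v := fun v => exp_matLog l (ρ v) (hnil v)
  have hcommL : ∀ v w, Commute (L0 v) (L0 w) := fun v w => commute_aeval₂ (hcommρ v w) _ _
  have hadd : ∀ v w, L0 (v + w) = L0 v + L0 w := by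
    intro v w
    apply exp_inj_of_isNilpotent ⟨l + 1, hL0nil _⟩
      ((hcommL v w).isNilpotent_add ⟨l + 1, hL0nil v⟩ ⟨l + 1, hL0nil w⟩)
    rw [hexp, Matrix.exp_add_of_commute _ _ (hcommL v w), hexp, hexp, hhom]
  have hqs : ∀ (q : ℚ) (v : Fin n → ℂ), L0 ((q : ℂ) • v) = (q : ℂ) • L0 v := by
    intro q v
    rw [Rat.cast_smul_eq_qsmul, Rat.cast_smul_eq_qsmul]
    exact map_rat_smul (AddMonoidHom.mk' L0 hadd) q v
  -- polynomial entries of L0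
  choose p hp using hpoly
  set Pm : Matrix (Fin N) (Fin N) (MvPolynomial (Fin n) ℂ) := Matrix.of p with hPm
  have hρ : ∀ v, ρ v = (MvPolynomial.aeval v : MvPolynomial (Fin n) ℂ →ₐ[ℂ] ℂ).mapMatrix Pm := by
    intro v
    ext a b
    rw [AlgHom.mapMatrix_apply, Matrix.map_apply, mv_aeval_eq_eval]
    exact hp a b v
  set Q : Matrix (Fin N) (Fin N) (MvPolynomial (Fin n) ℂ) :=
    Polynomial.aeval (Pm - 1) (Lgpoly (l + 1)) with hQ
  have hentry : ∀ v a b, L0 v a b = MvPolynomial.eval v (Q a b) := by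
    intro v a b
    have h1 : L0 v = (MvPolynomial.aeval v : MvPolynomial (Fin n) ℂ →ₐ[ℂ] ℂ).mapMatrix Q := by
      rw [hQ, ← Polynomial.aeval_algHom_apply]
      have h2 : (MvPolynomial.aeval v : MvPolynomial (Fin n) ℂ →ₐ[ℂ] ℂ).mapMatrix (Pm - 1)
          = ρ v - 1 := by
        rw [map_sub, map_one, ← hρ]
      rw [h2]
      rfl
    rw [h1, AlgHom.mapMatrix_apply, Matrix.map_apply, mv_aeval_eq_eval]
  have hsmul : ∀ (c : ℂ) (v : Fin n → ℂ), L0 (c • v) = c • L0 v := by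
    intro c v
    ext a b
    set r : Polynomial ℂ :=
      MvPolynomial.aeval (fun i => Polynomial.C (v i) * Polynomial.X) (Q a b) with hr
    have hre : ∀ t : ℂ, Polynomial.eval t r = L0 (t • v) a b := by
      intro t
      rw [hentry, hr, eval_aeval_line]
    have hzero : r - Polynomial.C (L0 v a b) * Polynomial.X = 0 := by
      apply Polynomial.eq_zero_of_infinite_isRoot
      apply (Set.infinite_range_of_injective (Rat.cast_injective (α := ℂ))).mono
      rintro x ⟨q, rfl⟩
      have h1 : Polynomial.eval (q : ℂ) r = (q : ℂ) * (L0 v a b) := by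
        rw [hre, hqs, Matrix.smul_apply, smul_eq_mul]
      simp only [Set.mem_setOf_eq, Polynomial.IsRoot, Polynomial.eval_sub, Polynomial.eval_mul,
        Polynomial.eval_C, Polynomial.eval_X, h1]
      ring
    have h2 := congrArg (Polynomial.eval c) hzero
    rw [Polynomial.eval_sub, Polynomial.eval_mul, Polynomial.eval_C, Polynomial.eval_X,
      Polynomial.eval_zero, sub_eq_zero, hre] at h2
    rw [h2, Matrix.smul_apply, smul_eq_mul]
    ring
  refine ⟨{ toFun := L0, map_add' := hadd, map_smul' := hsmul }, hL0nil, fun v => (hexp v).symm⟩
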